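/- Let p ∈ [1,∞), and suppose there exist a continuously differentiable V : D → [0,∞), continuous g, r : D × D → ℝ, and constants σ, ω, Γ₁, Γ₂ ≥ 0, c > 0 with σ + ω < 1 such that: (i) ∇V(x)·f(u, x, w) ≤ −c|h(x)|^p + g(u, x) + r(x, w) for all x, u, w ∈ D; (ii) r(x, w) + g(x, w) ≤ cσ|h(x)|^p + cω|h(w)|^p for all x, w ∈ D; (iii) g(u, x) ≤ Γ₁|h(u)|^p + cω|h(x)|^p for all x ∈ D, u ∈ Ω; (iv) r(x, w) ≤ cσ|h(x)|^p + Γ₂|h(w)|^p for all x ∈ D, w ∈ S. Then for every n ∈ ℕ, all continuous inputs u : [0,∞) → Ω and w : [0,∞) → S, every ξ = (ξ_1,…,ξ_n) ∈ D^n, and every solution (x_1,…,x_n) of the string (Σ_n) with these inputs and initial condition ξ, the estimate ‖h∘x_i‖_{[0,t],p} ≤ (Γ₁/(c(1−σ−ω)))^{1/p}‖h∘u‖_{[0,t],p} + (Γ₂/(c(1−σ−ω)))^{1/p}‖h∘w‖_{[0,t],p} + ((Σ_{j=1}^{n} V(ξ_j))/(c(1−σ−ω)))^{1/p} holds for all t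 ≥ 0 and all i = 1,…,n. -/

import Mathlib

/-- The `L^p` norm of a signal `y` on the interval `[0, t]`:
`‖y‖_{[0,t],p} = (∫_0^t |y(s)|^p ds)^{1/p}`. -/
noncomputable def lpNorm {m : ℕ} (p : ℝ) (y : ℝ → EuclideanSpace ℝ (Fin m)) (t : ℝ) : ℝ :=
  (∫ s in (0:ℝ)..t, ‖y s‖ ^ p) ^ (1 / p)

/-! The Lyapunov function of the whole string is `W = ∑ⱼ V(xⱼ)`. Summing (4.1) over the
components, the coupling terms regroup by links: the link between `xⱼ` and `xⱼ₊₁` carries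
`r(xⱼ, xⱼ₊₁) + g(xⱼ, xⱼ₊₁)`, bounded by (4.2) for interior links, while the two boundary links
are bounded by (4.3) and (4.4). Hence
`W' ≤ Γ₁|h(u)|^p + Γ₂|h(w)|^p - c(1 - σ - ω) ∑ⱼ |h(xⱼ)|^p`; integrating over `[0, t]` and using
`W ≥ 0` bounds `c(1 - σ - ω) ∫|h(xᵢ)|^p`, and the subadditivity of `s ↦ s^(1/p)` splits the
`p`-th root of that bound into the three terms of the estimate. -/

open Finset MeasureTheory

theorem sum_le_of_link_bounds (a G R : ℕ → ℝ) {α β Γ₁ Γ₂ : ℝ} {n : ℕ} (hn : 1 ≤ n)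
    (hfirst : G 1 ≤ Γ₁ * a 0 + β * a 1)
    (hlink : ∀ j ∈ Ico 1 n, R j + G (j + 1) ≤ α * a j + β * a (j + 1))
    (hlast : R n ≤ α * a n + Γ₂ * a (n + 1)) :
    ∑ j ∈ Icc 1 n, (G j + R j) ≤ Γ₁ * a 0 + Γ₂ * a (n + 1) + (α + β) * ∑ j ∈ Icc 1 n, a j := by
  -- the last link of a partial chain is left unbounded, so its `R m` stays on the right
  have partial_sum : ∀ m, 1 ≤ m → m ≤ n → ∑ j ∈ Icc 1 m, (G j + R j) ≤
      Γ₁ * a 0 + (α + β) * ∑ j ∈ Icc 1 m, a j - α * a m + R m := by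
    intro m hm
    induction m, hm using Nat.le_induction with
    | base => intro _; simp only [Icc_self, sum_singleton]; linarith
    | succ m hm ih =>
      intro hmn
      rw [sum_Icc_succ_top (by omega), sum_Icc_succ_top (by omega)]
      linear_combination ih (by omega) + hlink m (mem_Ico.mpr ⟨hm, hmn⟩)
  linear_combination partial_sum n hn le_rfl + hlast

theorem mul_integral_le_of_hasDerivAt_le {W W' Y Z : ℝ → ℝ} {K t : ℝ} (ht : 0 ≤ t)
    (hW : ∀ s ∈ Set.Icc 0 t, HasDerivAt W (W' s) s)
    (hY : IntervalIntegrable Y volume 0 t) (hZ : IntervalIntegrable Z volume 0 t)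
    (hle : ∀ s ∈ Set.Ioo 0 t, W' s ≤ Z s - K * Y s) :
    K * ∫ s in 0..t, Y s ≤ W 0 - W t + ∫ s in 0..t, Z s := by
  have := intervalIntegral.sub_le_integral_of_hasDeriv_right_of_le ht
    (fun s hs => (hW s hs).continuousAt.continuousWithinAt)
    (fun s hs => (hW s (Set.Ioo_subset_Icc_self hs)).hasDerivWithinAt)
    ((intervalIntegrable_iff_integrableOn_Icc_of_le ht).mp (hZ.sub (hY.const_mul K))) hle
  rw [intervalIntegral.integral_sub hZ (hY.const_mul K),
    intervalIntegral.integral_const_mul] at this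
  linarith

theorem rpow_le_of_mul_le_add {p K Γ₁ Γ₂ a b v I : ℝ} (hp : 1 ≤ p) (hK : 0 < K)
    (hΓ₁ : 0 ≤ Γ₁) (hΓ₂ : 0 ≤ Γ₂) (ha : 0 ≤ a) (hb : 0 ≤ b) (hv : 0 ≤ v) (hI : 0 ≤ I)
    (h : K * I ≤ Γ₁ * a + Γ₂ * b + v) :
    I ^ (1 / p) ≤ (Γ₁ / K) ^ (1 / p) * a ^ (1 / p) + (Γ₂ / K) ^ (1 / p) * b ^ (1 / p) +
      (v / K) ^ (1 / p) := by
  have hq0 : 0 ≤ 1 / p := by positivity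
  have hq1 : 1 / p ≤ 1 := (div_le_one (by linarith)).mpr hp
  have hI' : I ≤ Γ₁ / K * a + Γ₂ / K * b + v / K := by
    rw [div_mul_eq_mul_div, div_mul_eq_mul_div, ← add_div, ← add_div, le_div_iff₀ hK]
    linarith
  calc I ^ (1 / p) ≤ (Γ₁ / K * a + Γ₂ / K * b + v / K) ^ (1 / p) := Real.rpow_le_rpow hI hI' hq0
    _ ≤ (Γ₁ / K * a + Γ₂ / K * b) ^ (1 / p) + (v / K) ^ (1 / p) :=
      Real.rpow_add_le_add_rpow (by positivity) (by positivity) hq0 hq1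
    _ ≤ (Γ₁ / K * a) ^ (1 / p) + (Γ₂ / K * b) ^ (1 / p) + (v / K) ^ (1 / p) := by
      gcongr
      exact Real.rpow_add_le_add_rpow (by positivity) (by positivity) hq0 hq1
    _ = _ := by rw [Real.mul_rpow (by positivity) ha, Real.mul_rpow (by positivity) hb]

section

variable {E F : Type*} [NormedAddCommGroup E] [NormedSpace ℝ E] [NormedAddCommGroup F]

/-- `x 0` and `x (n + 1)` are the boundary inputs; only the components `1, …, n` are constrained. -/
def IsStringSolution (D : Set E) (f : E → E → E → E) (n : ℕ) (ξ : ℕ → E) (x : ℕ → ℝ → E) :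
    Prop :=
  ∀ i, 1 ≤ i → i ≤ n → (∀ t ≥ (0:ℝ), x i t ∈ D) ∧ x i 0 = ξ i ∧
    ∀ t ≥ (0:ℝ), HasDerivAt (x i) (f (x (i - 1) t) (x i t) (x (i + 1) t)) t

theorem sum_fderiv_le_of_string_bounds {D Ω S : Set E} (hΩ : Ω ⊆ D) (hS : S ⊆ D) {h : E → F}
    {f : E → E → E → E} {V : E → ℝ} {g r : E → E → ℝ} {p c σ ω Γ₁ Γ₂ : ℝ}
    (H1 : ∀ x ∈ D, ∀ u ∈ D, ∀ w ∈ D, fderiv ℝ V x (f u x w) ≤ -c * ‖h x‖ ^ p + g u x + r x w)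
    (H2 : ∀ x ∈ D, ∀ w ∈ D, r x w + g x w ≤ c * σ * ‖h x‖ ^ p + c * ω * ‖h w‖ ^ p)
    (H3 : ∀ x ∈ D, ∀ u ∈ Ω, g u x ≤ Γ₁ * ‖h u‖ ^ p + c * ω * ‖h x‖ ^ p)
    (H4 : ∀ x ∈ D, ∀ w ∈ S, r x w ≤ c * σ * ‖h x‖ ^ p + Γ₂ * ‖h w‖ ^ p)
    {n : ℕ} (hn : 1 ≤ n) {z : ℕ → E} (hzD : ∀ j ∈ Icc 1 n, z j ∈ D) (hz0 : z 0 ∈ Ω)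
    (hzS : z (n + 1) ∈ S) :
    ∑ j ∈ Icc 1 n, fderiv ℝ V (z j) (f (z (j - 1)) (z j) (z (j + 1))) ≤
      Γ₁ * ‖h (z 0)‖ ^ p + Γ₂ * ‖h (z (n + 1))‖ ^ p -
        c * (1 - σ - ω) * ∑ j ∈ Icc 1 n, ‖h (z j)‖ ^ p := by
  have hD : ∀ j ≤ n + 1, z j ∈ D := by
    intro j hj
    rcases Nat.eq_zero_or_pos j with rfl | hj0
    · exact hΩ hz0
    rcases hj.eq_or_lt with rfl | hjn
    · exact hS hzS
    exact hzD j (mem_Icc.mpr ⟨hj0, by omega⟩)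
  have hlinks := sum_le_of_link_bounds (fun j => ‖h (z j)‖ ^ p) (fun j => g (z (j - 1)) (z j))
    (fun j => r (z j) (z (j + 1))) hn (α := c * σ) (β := c * ω)
    (by simpa using H3 (z 1) (hD 1 (by omega)) (z 0) hz0)
    (fun j hj => by
      have hj := mem_Ico.mp hj
      simpa using H2 (z j) (hD j (by omega)) (z (j + 1)) (hD (j + 1) (by omega)))
    (H4 (z n) (hD n (by omega)) (z (n + 1)) hzS)
  calc ∑ j ∈ Icc 1 n, fderiv ℝ V (z j) (f (z (j - 1)) (z j) (z (j + 1)))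
      ≤ ∑ j ∈ Icc 1 n, (-c * ‖h (z j)‖ ^ p + (g (z (j - 1)) (z j) + r (z j) (z (j + 1)))) := by
        refine sum_le_sum fun j hj => ?_
        have hj := mem_Icc.mp hj
        linarith [H1 (z j) (hD j (by omega)) (z (j - 1)) (hD (j - 1) (by omega))
          (z (j + 1)) (hD (j + 1) (by omega))]
    _ = -c * ∑ j ∈ Icc 1 n, ‖h (z j)‖ ^ p +
          ∑ j ∈ Icc 1 n, (g (z (j - 1)) (z j) + r (z j) (z (j + 1))) := by
        rw [sum_add_distrib, mul_sum]
    _ ≤ _ := by linarith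

theorem IsStringSolution.continuousOn_mapsTo {D : Set E} {f : E → E → E → E} {n : ℕ}
    {ξ : ℕ → E} {x : ℕ → ℝ → E} (hsol : IsStringSolution D f n ξ x)
    (hu : ContinuousOn (x 0) (Set.Ici 0)) (hw : ContinuousOn (x (n + 1)) (Set.Ici 0))
    (huD : Set.MapsTo (x 0) (Set.Ici 0) D) (hwD : Set.MapsTo (x (n + 1)) (Set.Ici 0) D)
    {j : ℕ} (hj : j ≤ n + 1) :
    ContinuousOn (x j) (Set.Ici 0) ∧ Set.MapsTo (x j) (Set.Ici 0) D := by
  rcases Nat.eq_zero_or_pos j with rfl | hj0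
  · exact ⟨hu, huD⟩
  rcases hj.eq_or_lt with rfl | hjn
  · exact ⟨hw, hwD⟩
  obtain ⟨hxD, -, hx'⟩ := hsol j hj0 (by omega)
  exact ⟨fun s hs => (hx' s hs).continuousAt.continuousWithinAt, hxD⟩

theorem IsStringSolution.intervalIntegrable_norm_rpow {D : Set E} {h : E → F}
    (hh : ContinuousOn h D) {f : E → E → E → E} {p : ℝ} (hp : 0 ≤ p) {n : ℕ} {ξ : ℕ → E}
    {x : ℕ → ℝ → E} (hsol : IsStringSolution D f n ξ x)
    (hu : ContinuousOn (x 0) (Set.Ici 0)) (hw : ContinuousOn (x (n + 1)) (Set.Ici 0))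
    (huD : Set.MapsTo (x 0) (Set.Ici 0) D) (hwD : Set.MapsTo (x (n + 1)) (Set.Ici 0) D)
    {j : ℕ} (hj : j ≤ n + 1) {t : ℝ} (ht : 0 ≤ t) :
    IntervalIntegrable (fun s => ‖h (x j s)‖ ^ p) volume 0 t := by
  obtain ⟨hxC, hxD⟩ := hsol.continuousOn_mapsTo hu hw huD hwD hj
  exact (((hh.comp hxC hxD).norm.rpow_const fun _ _ => Or.inr hp).mono
    Set.Icc_subset_Ici_self).intervalIntegrable_of_Icc ht

theorem IsStringSolution.hasDerivAt_sum_comp {D : Set E} (hD : IsOpen D) {f : E → E → E → E}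
    {V : E → ℝ} (hV : ContDiffOn ℝ 1 V D) {n : ℕ} {ξ : ℕ → E} {x : ℕ → ℝ → E}
    (hsol : IsStringSolution D f n ξ x) {s : ℝ} (hs : 0 ≤ s) :
    HasDerivAt (fun s => ∑ j ∈ Icc 1 n, V (x j s))
      (∑ j ∈ Icc 1 n, fderiv ℝ V (x j s) (f (x (j - 1) s) (x j s) (x (j + 1) s))) s := by
  refine HasDerivAt.fun_sum fun j hj => ?_
  obtain ⟨hxD, -, hx'⟩ := hsol j (mem_Icc.mp hj).1 (mem_Icc.mp hj).2
  have hVx := (hV.differentiableOn_one _ (hxD s hs)).differentiableAt (hD.mem_nhds (hxD s hs))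
  exact hVx.hasFDerivAt.comp_hasDerivAt s (hx' s hs)

theorem IsStringSolution.mul_integral_norm_rpow_le {D Ω S : Set E} (hD : IsOpen D) (hΩ : Ω ⊆ D)
    (hS : S ⊆ D) {h : E → F} (hh : ContinuousOn h D) {f : E → E → E → E} {V : E → ℝ}
    (hV : ContDiffOn ℝ 1 V D) (hV0 : ∀ x ∈ D, 0 ≤ V x) {g r : E → E → ℝ}
    {p c σ ω Γ₁ Γ₂ : ℝ} (hp : 0 ≤ p) (hK : 0 ≤ c * (1 - σ - ω))
    (H1 : ∀ x ∈ D, ∀ u ∈ D, ∀ w ∈ D, fderiv ℝ V x (f u x w) ≤ -c * ‖h x‖ ^ p + g u x + r x w)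
    (H2 : ∀ x ∈ D, ∀ w ∈ D, r x w + g x w ≤ c * σ * ‖h x‖ ^ p + c * ω * ‖h w‖ ^ p)
    (H3 : ∀ x ∈ D, ∀ u ∈ Ω, g u x ≤ Γ₁ * ‖h u‖ ^ p + c * ω * ‖h x‖ ^ p)
    (H4 : ∀ x ∈ D, ∀ w ∈ S, r x w ≤ c * σ * ‖h x‖ ^ p + Γ₂ * ‖h w‖ ^ p)
    {n : ℕ} {ξ : ℕ → E} {x : ℕ → ℝ → E} (hsol : IsStringSolution D f n ξ x)
    (hu : ContinuousOn (x 0) (Set.Ici 0)) (hw : ContinuousOn (x (n + 1)) (Set.Ici 0))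
    (huΩ : ∀ t ≥ (0:ℝ), x 0 t ∈ Ω) (hwS : ∀ t ≥ (0:ℝ), x (n + 1) t ∈ S)
    {i : ℕ} (hi : i ∈ Icc 1 n) {t : ℝ} (ht : 0 ≤ t) :
    c * (1 - σ - ω) * ∫ s in 0..t, ‖h (x i s)‖ ^ p ≤
      Γ₁ * (∫ s in 0..t, ‖h (x 0 s)‖ ^ p) + Γ₂ * (∫ s in 0..t, ‖h (x (n + 1) s)‖ ^ p) +
        ∑ j ∈ Icc 1 n, V (ξ j) := by
  have hn : 1 ≤ n := (mem_Icc.mp hi).1.trans (mem_Icc.mp hi).2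
  have hint : ∀ j ≤ n + 1, IntervalIntegrable (fun s => ‖h (x j s)‖ ^ p) volume 0 t :=
    fun j hj => hsol.intervalIntegrable_norm_rpow hh hp hu hw (fun s hs => hΩ (huΩ s hs))
      (fun s hs => hS (hwS s hs)) hj ht
  have hsum : IntervalIntegrable (fun s => ∑ j ∈ Icc 1 n, ‖h (x j s)‖ ^ p) volume 0 t := by
    simpa only [Finset.sum_fn] using
      IntervalIntegrable.sum _ fun j hj => hint j (by linarith [(mem_Icc.mp hj).2])
  have hdiss := mul_integral_le_of_hasDerivAt_le ht
    (fun s hs => hsol.hasDerivAt_sum_comp hD hV hs.1) hsum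
    (((hint 0 (by omega)).const_mul Γ₁).add ((hint (n + 1) le_rfl).const_mul Γ₂))
    fun s hs => sum_fderiv_le_of_string_bounds hΩ hS H1 H2 H3 H4 hn
      (fun j hj => (hsol j (mem_Icc.mp hj).1 (mem_Icc.mp hj).2).1 s hs.1.le)
      (huΩ s hs.1.le) (hwS s hs.1.le)
  have hWt : 0 ≤ ∑ j ∈ Icc 1 n, V (x j t) :=
    sum_nonneg fun j hj => hV0 _ ((hsol j (mem_Icc.mp hj).1 (mem_Icc.mp hj).2).1 t ht)
  have hW0 : ∑ j ∈ Icc 1 n, V (x j 0) = ∑ j ∈ Icc 1 n, V (ξ j) :=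
    sum_congr rfl fun j hj => by rw [(hsol j (mem_Icc.mp hj).1 (mem_Icc.mp hj).2).2.1]
  have hcomponent : ∫ s in 0..t, ‖h (x i s)‖ ^ p ≤ ∫ s in 0..t, ∑ j ∈ Icc 1 n, ‖h (x j s)‖ ^ p :=
    intervalIntegral.integral_mono_on ht (hint i (by linarith [(mem_Icc.mp hi).2])) hsum
      fun s _ => single_le_sum (f := fun j => ‖h (x j s)‖ ^ p) (fun j _ => by positivity) hi
  rw [intervalIntegral.integral_add ((hint 0 (by omega)).const_mul Γ₁)
      ((hint (n + 1) le_rfl).const_mul Γ₂), intervalIntegral.integral_const_mul,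
    intervalIntegral.integral_const_mul, hW0] at hdiss
  linarith [mul_le_mul_of_nonneg_left hcomponent hK]

end

theorem lyapunov_string_stability {k m : ℕ}
    (D : Set (EuclideanSpace ℝ (Fin k))) (hDopen : IsOpen D)
    (Ω S : Set (EuclideanSpace ℝ (Fin k))) (hΩ : Ω ⊆ D) (hS : S ⊆ D)
    (h : EuclideanSpace ℝ (Fin k) → EuclideanSpace ℝ (Fin m))
    (hhcont : ContinuousOn h D)
    (f : EuclideanSpace ℝ (Fin k) → EuclideanSpace ℝ (Fin k) → EuclideanSpace ℝ (Fin k) →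
      EuclideanSpace ℝ (Fin k))
    (p : ℝ) (hp : 1 ≤ p)
    (V : EuclideanSpace ℝ (Fin k) → ℝ) (hV : ContDiffOn ℝ 1 V D) (hV0 : ∀ x ∈ D, 0 ≤ V x)
    (g r : EuclideanSpace ℝ (Fin k) → EuclideanSpace ℝ (Fin k) → ℝ)
    (σ ω Γ₁ Γ₂ c : ℝ) (hΓ₁ : 0 ≤ Γ₁) (hΓ₂ : 0 ≤ Γ₂) (hc : 0 < c)
    (hσω : σ + ω < 1)
    -- (4.1): ∇V(x)·f(u,x,w) ≤ −c|h(x)|^p + g(u,x) + r(x,w)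
    (H1 : ∀ x ∈ D, ∀ u ∈ D, ∀ w ∈ D,
      fderiv ℝ V x (f u x w) ≤ -c * ‖h x‖ ^ p + g u x + r x w)
    -- (4.2): r(x,w) + g(x,w) ≤ cσ|h(x)|^p + cω|h(w)|^p
    (H2 : ∀ x ∈ D, ∀ w ∈ D,
      r x w + g x w ≤ c * σ * ‖h x‖ ^ p + c * ω * ‖h w‖ ^ p)
    -- (4.3): g(u,x) ≤ Γ₁|h(u)|^p + cω|h(x)|^p for u ∈ Ω
    (H3 : ∀ x ∈ D, ∀ u ∈ Ω,
      g u x ≤ Γ₁ * ‖h u‖ ^ p + c * ω * ‖h x‖ ^ p)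
    -- (4.4): r(x,w) ≤ cσ|h(x)|^p + Γ₂|h(w)|^p for w ∈ S
    (H4 : ∀ x ∈ D, ∀ w ∈ S,
      r x w ≤ c * σ * ‖h x‖ ^ p + Γ₂ * ‖h w‖ ^ p) :
    -- conclusion: the string estimate (2.2) with the explicit gains of Theorem 4
    ∀ n : ℕ, ∀ u w : ℝ → EuclideanSpace ℝ (Fin k),
      ContinuousOn u (Set.Ici 0) → ContinuousOn w (Set.Ici 0) →
      (∀ t ≥ (0:ℝ), u t ∈ Ω) → (∀ t ≥ (0:ℝ), w t ∈ S) →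
      ∀ ξ : ℕ → EuclideanSpace ℝ (Fin k), (∀ i, 1 ≤ i → i ≤ n → ξ i ∈ D) →
      ∀ x : ℕ → ℝ → EuclideanSpace ℝ (Fin k),
        (∀ t, x 0 t = u t) → (∀ t, x (n + 1) t = w t) →
        (∀ i, 1 ≤ i → i ≤ n →
          (∀ t ≥ (0:ℝ), x i t ∈ D) ∧ x i 0 = ξ i ∧
          (∀ t ≥ (0:ℝ), HasDerivAt (x i) (f (x (i - 1) t) (x i t) (x (i + 1) t)) t)) →
        ∀ i, 1 ≤ i → i ≤ n → ∀ t ≥ (0:ℝ),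
          lpNorm p (fun s => h (x i s)) t ≤
            (Γ₁ / (c * (1 - σ - ω))) ^ (1 / p) * lpNorm p (fun s => h (u s)) t +
            (Γ₂ / (c * (1 - σ - ω))) ^ (1 / p) * lpNorm p (fun s => h (w s)) t +
            ((∑ j ∈ Finset.Icc 1 n, V (ξ j)) / (c * (1 - σ - ω))) ^ (1 / p) := by
  intro n u w hu hw huΩ hwS ξ hξ x hx0 hxN hsol i hi hin t ht
  obtain rfl : u = x 0 := funext fun s => (hx0 s).symm
  obtain rfl : w = x (n + 1) := funext fun s => (hxN s).symm
  have hsol : IsStringSolution D f n ξ x := hsol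
  have hK : 0 < c * (1 - σ - ω) := mul_pos hc (by linarith)
  have henergy := hsol.mul_integral_norm_rpow_le hDopen hΩ hS hhcont hV hV0 (by linarith) hK.le
    H1 H2 H3 H4 hu hw huΩ hwS (mem_Icc.mpr ⟨hi, hin⟩) ht
  exact rpow_le_of_mul_le_add hp hK hΓ₁ hΓ₂
    (intervalIntegral.integral_nonneg ht fun s _ => by positivity)
    (intervalIntegral.integral_nonneg ht fun s _ => by positivity)
    (sum_nonneg fun j hj => hV0 _ (hξ j (mem_Icc.mp hj).1 (mem_Icc.mp hj).2))
    (intervalIntegral.integral_nonneg ht fun s _ => by positivity) henergy
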